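/- For any antichain S in F_{2k}^{[1,n]} and any i ≥ 1: S([i+1, i+2]) ≤_p S([i, i+1]), and (S − 1_{2k})([i, i+1]) = S([i+1, i+2]) − 1_{2k-2}. -/

import Mathlib

/-- `F ≤_p G`: componentwise comparison of the increasing enumerations. -/
def lep (F G : Finset ℕ) : Prop :=
  F.card = G.card ∧ ∀ ℓ, (F.sort (· ≤ ·)).getD ℓ 0 ≤ (G.sort (· ≤ ·)).getD ℓ 0

/-- `F ≺_p G`: `F ≤_p G - 1` componentwise on increasing enumerations. -/
def prep (F G : Finset ℕ) : Prop :=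
  F.card = G.card ∧ ∀ ℓ < F.card,
    (F.sort (· ≤ ·)).getD ℓ 0 + 1 ≤ (G.sort (· ≤ ·)).getD ℓ 0

/-- The poset `F_{2k}^{[1,n]}`: `2k`-subsets of `[n]` that are disjoint unions
of `k` adjacent pairs `{y_j, y_j + 1}` with gaps `≥ 2`. -/
def FF (k n : ℕ) : Set (Finset ℕ) :=
  {F | ∃ y : ℕ → ℕ, (1 ≤ y 1) ∧ (∀ j, 1 ≤ j → j ≤ k → y j + 1 ≤ n) ∧
    (∀ j, 1 ≤ j → j < k → y j + 2 ≤ y (j + 1)) ∧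
    F = (Finset.Icc 1 k).biUnion (fun j => {y j, y j + 1})}

/-- The order ideal of `F_{2k}^{[1,n]}` generated by `S`. -/
def idealOf (k n : ℕ) (S : Set (Finset ℕ)) : Set (Finset ℕ) :=
  {G | G ∈ FF k n ∧ ∃ F ∈ S, lep G F}

/-- `S` is an antichain in `F_{2k}^{[1,n]}`. -/
def IsAC (k n : ℕ) (S : Set (Finset ℕ)) : Prop :=
  S ⊆ FF k n ∧ ∀ F ∈ S, ∀ G ∈ S, lep F G → F = G

/-- The candidates defining `S(J)` for the interval `J = [j, j+2l-1]`:
sets `H ⊆ [j+2l, n]` with `J ∪ H ∈ F(S)`. -/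
def SJcand (k n : ℕ) (S : Set (Finset ℕ)) (j l : ℕ) : Set (Finset ℕ) :=
  {H | (∀ a ∈ H, j + 2 * l ≤ a ∧ a ≤ n) ∧
    (Finset.Icc j (j + 2 * l - 1) ∪ H) ∈ idealOf k n S}

/-- `S(J)`, `J = [j, j+2l-1]`: the maximal elements of `SJcand`. -/
def SJ (k n : ℕ) (S : Set (Finset ℕ)) (j l : ℕ) : Set (Finset ℕ) :=
  {H | H ∈ SJcand k n S j l ∧ ∀ H' ∈ SJcand k n S j l, lep H H' → H = H'}

/-- `T ≤_p S` for antichains: every element of `T` is `≤_p` some element of `S`. -/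
def ACle (T S : Set (Finset ℕ)) : Prop := ∀ G ∈ T, ∃ F ∈ S, lep G F

/-- `T ≺_p S` for antichains: every element of `T` is `≺_p` some element of `S`. -/
def ACprec (T S : Set (Finset ℕ)) : Prop := ∀ G ∈ T, ∃ F ∈ S, prep G F

/-- `S - 1`: subtract the all-ones vector from each element of `S` with
minimum `> 1`. -/
def sub1 (S : Set (Finset ℕ)) : Set (Finset ℕ) :=
  {G | ∃ F ∈ S, (∀ a ∈ F, 2 ≤ a) ∧ G = F.image (fun a => a - 1)}

/-- The facets of `B(S, i)`: elements of the order ideal `F(S)` whose minimum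
is at least `i`. -/
def Bfacets (k n : ℕ) (S : Set (Finset ℕ)) (i : ℕ) : Set (Finset ℕ) :=
  {G | G ∈ idealOf k n S ∧ ∀ a ∈ G, i ≤ a}

/-!
Moving the first pair `[i+1, i+2]` of an element of `F_{2k}^{[1,n]}` down to `[i, i+1]` keeps it
in `F_{2k}^{[1,n]}` and makes it smaller for `≤_p`, so every candidate for `S([i+1, i+2])` is a
candidate for `S([i, i+1])`; it lies below a maximal one because the candidates are bounded and the
coordinate sum strictly increases along `≤_p`. For the second claim, `H ↦ H - 1` and `G ↦ G + 1`
are mutually inverse `≤_p`-monotone bijections between the candidates for `[i+1, i+2]` in `S` and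
those for `[i, i+1]` in `S - 1`, hence they match the maximal elements.
-/

open Finset

lemma lep_refl (F : Finset ℕ) : lep F F := ⟨rfl, fun _ => le_rfl⟩

lemma lep_trans {F G H : Finset ℕ} (h₁ : lep F G) (h₂ : lep G H) : lep F H :=
  ⟨h₁.1.trans h₂.1, fun ℓ => (h₁.2 ℓ).trans (h₂.2 ℓ)⟩

section SortedEnumeration

lemma getD_sort_mem {F : Finset ℕ} {ℓ : ℕ} (h : ℓ < #F) : (F.sort (· ≤ ·)).getD ℓ 0 ∈ F := by
  rw [← length_sort (· ≤ ·)] at h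
  rw [List.getD_eq_getElem _ _ h]
  exact (mem_sort (· ≤ ·)).mp (List.getElem_mem h)

lemma exists_getD_sort_eq {F : Finset ℕ} {a : ℕ} (h : a ∈ F) :
    ∃ ℓ < #F, (F.sort (· ≤ ·)).getD ℓ 0 = a := by
  obtain ⟨ℓ, hℓ, rfl⟩ := List.mem_iff_getElem.mp ((mem_sort (· ≤ ·)).mpr h)
  exact ⟨ℓ, by simpa using hℓ, List.getD_eq_getElem _ _ hℓ⟩

lemma getD_sort_zero_le {F : Finset ℕ} {a : ℕ} (h : a ∈ F) :
    (F.sort (· ≤ ·)).getD 0 0 ≤ a := by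
  obtain ⟨ℓ, hℓ, rfl⟩ := exists_getD_sort_eq h
  have hℓ' : ℓ < (F.sort (· ≤ ·)).length := by simpa using hℓ
  rw [List.getD_eq_getElem _ _ (Nat.zero_lt_of_lt hℓ'), List.getD_eq_getElem _ _ hℓ']
  rcases Nat.eq_zero_or_pos ℓ with rfl | hpos
  · exact le_rfl
  · exact (pairwise_sort _ _).rel_get_of_lt (a := ⟨0, _⟩) (b := ⟨ℓ, hℓ'⟩) hpos

lemma exists_ge_of_lep {X F : Finset ℕ} (h : lep X F) {a : ℕ} (ha : a ∈ X) :
    ∃ b ∈ F, a ≤ b := by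
  obtain ⟨ℓ, hℓ, rfl⟩ := exists_getD_sort_eq ha
  exact ⟨_, getD_sort_mem (h.1 ▸ hℓ), h.2 ℓ⟩

lemma exists_le_of_lep {X F : Finset ℕ} (h : lep X F) (hX : X.Nonempty) {b : ℕ} (hb : b ∈ F) :
    ∃ a ∈ X, a ≤ b :=
  ⟨_, getD_sort_mem hX.card_pos, (h.2 0).trans (getD_sort_zero_le hb)⟩

lemma sort_image {F : Finset ℕ} {f : ℕ → ℕ} (hf : Monotone f) (hinj : Set.InjOn f F) :
    (F.image f).sort (· ≤ ·) = (F.sort (· ≤ ·)).map f := by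
  apply List.Perm.eq_of_pairwise' (pairwise_sort _ _)
  · exact (pairwise_sort F (· ≤ ·)).map f fun _ _ hab => hf hab
  · rw [← Multiset.coe_eq_coe, sort_eq, ← Multiset.map_coe, sort_eq]
    exact image_val_of_injOn hinj

lemma lep_image {F G : Finset ℕ} {f : ℕ → ℕ} (hf : Monotone f)
    (hF : Set.InjOn f F) (hG : Set.InjOn f G) (h : lep F G) :
    lep (F.image f) (G.image f) := by
  refine ⟨by rw [card_image_of_injOn hF, card_image_of_injOn hG, h.1], fun ℓ => ?_⟩
  rw [sort_image hf hF, sort_image hf hG]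
  by_cases hℓ : ℓ < #F
  · have hℓF : ℓ < (F.sort (· ≤ ·)).length := by simpa using hℓ
    have hℓG : ℓ < (G.sort (· ≤ ·)).length := by simpa [← h.1] using hℓ
    have := h.2 ℓ
    rw [List.getD_eq_getElem _ _ hℓF, List.getD_eq_getElem _ _ hℓG] at this
    rw [List.getD_eq_getElem _ _ (by simpa using hℓF),
      List.getD_eq_getElem _ _ (by simpa using hℓG), List.getElem_map, List.getElem_map]
    exact hf this
  · rw [List.getD_eq_default, List.getD_eq_default] <;> simp [← h.1] <;> omega

lemma List.sum_eq_sum_range_getD (l : List ℕ) :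
    l.sum = ∑ ℓ ∈ Finset.range l.length, l.getD ℓ 0 := by
  induction l with
  | nil => simp
  | cons a t ih => simp [Finset.sum_range_succ', ih, add_comm]

lemma sum_eq_sum_range_getD_sort (F : Finset ℕ) :
    ∑ a ∈ F, a = ∑ ℓ ∈ range #F, (F.sort (· ≤ ·)).getD ℓ 0 := by
  rw [← length_sort (· ≤ ·), ← List.sum_eq_sum_range_getD, ← Multiset.sum_coe, sort_eq,
    sum_eq_multiset_sum, Multiset.map_id']

lemma sum_le_sum_of_lep {F G : Finset ℕ} (h : lep F G) : ∑ a ∈ F, a ≤ ∑ a ∈ G, a := by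
  rw [sum_eq_sum_range_getD_sort, sum_eq_sum_range_getD_sort, ← h.1]
  exact sum_le_sum fun ℓ _ => h.2 ℓ

lemma eq_of_lep_of_sum_eq {F G : Finset ℕ} (h : lep F G) (hs : ∑ a ∈ F, a = ∑ a ∈ G, a) :
    F = G := by
  rw [sum_eq_sum_range_getD_sort, sum_eq_sum_range_getD_sort, ← h.1] at hs
  have hgetD := (sum_eq_sum_iff_of_le fun ℓ _ => h.2 ℓ).mp hs
  have hsort : F.sort (· ≤ ·) = G.sort (· ≤ ·) := by
    refine List.ext_getElem (by simp [h.1]) fun ℓ hF hG => ?_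
    have := hgetD ℓ (by simpa using hF)
    rwa [List.getD_eq_getElem _ _ hF, List.getD_eq_getElem _ _ hG] at this
  ext a
  rw [← mem_sort (· ≤ ·), ← mem_sort (· ≤ ·), hsort]

lemma exists_maximal_lep_of_bounded {𝒞 : Set (Finset ℕ)} {n : ℕ}
    (hbd : ∀ H ∈ 𝒞, ∀ a ∈ H, a ≤ n) {H : Finset ℕ} (hH : H ∈ 𝒞) :
    ∃ H', (H' ∈ 𝒞 ∧ ∀ H'' ∈ 𝒞, lep H' H'' → H' = H'') ∧ lep H H' := by
  have hfin : {H' ∈ 𝒞 | lep H H'}.Finite := by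
    refine (finite_toSet (range (n + 1)).powerset).subset fun X hX => ?_
    rw [mem_coe, mem_powerset]
    exact fun a ha => mem_range_succ_iff.mpr (hbd X hX.1 a ha)
  obtain ⟨H', ⟨hH'𝒞, hHH'⟩, hmax⟩ :=
    hfin.exists_maximalFor (fun X => ∑ a ∈ X, a) _ ⟨H, hH, lep_refl H⟩
  refine ⟨H', ⟨hH'𝒞, fun H'' hH'' hlep => ?_⟩, hHH'⟩
  exact eq_of_lep_of_sum_eq hlep <| (sum_le_sum_of_lep hlep).antisymm <|
    hmax ⟨hH'', lep_trans hHH' hlep⟩ (sum_le_sum_of_lep hlep)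

lemma sort_Icc_union {b : ℕ} {R : Finset ℕ} (hR : ∀ a ∈ R, b + 2 ≤ a) :
    (Icc b (b + 1) ∪ R).sort (· ≤ ·) = b :: (b + 1) :: R.sort (· ≤ ·) := by
  have hunion : Icc b (b + 1) ∪ R = insert b (insert (b + 1) R) := by
    ext a
    by_cases ha : a ∈ R <;> simp [ha]; omega
  rw [hunion, sort_insert, sort_insert]
  · exact fun c hc => by have := hR c hc; omega
  · exact fun hc => by have := hR _ hc; omega
  · simp only [mem_insert, forall_eq_or_imp]
    exact ⟨by omega, fun c hc => by have := hR c hc; omega⟩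
  · simp only [mem_insert, not_or]
    exact ⟨by omega, fun hc => by have := hR _ hc; omega⟩

lemma lep_Icc_union {a b : ℕ} (hba : b ≤ a) {R : Finset ℕ} (hR : ∀ c ∈ R, a + 2 ≤ c) :
    lep (Icc b (b + 1) ∪ R) (Icc a (a + 1) ∪ R) := by
  have hsb := sort_Icc_union (b := b) fun c hc => (Nat.add_le_add_right hba 2).trans (hR c hc)
  have hsa := sort_Icc_union hR
  refine ⟨?_, fun ℓ => ?_⟩
  · rw [← length_sort (· ≤ ·), ← length_sort (α := ℕ) (· ≤ ·), hsb, hsa]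
    rfl
  · rw [hsb, hsa]
    match ℓ with
    | 0 => simpa
    | 1 => simpa
    | m + 2 => simp

end SortedEnumeration

section PairDecompositions

variable {k n : ℕ}

lemma pairs_mono {y : ℕ → ℕ} (hgap : ∀ j, 1 ≤ j → j < k → y j + 2 ≤ y (j + 1))
    {a b : ℕ} (ha : 1 ≤ a) (hab : a ≤ b) (hb : b ≤ k) : y a ≤ y b := by
  induction b, hab using Nat.le_induction with
  | base => exact le_rfl
  | succ m ham ih =>
    have := hgap m (by omega) (by omega)
    have := ih (by omega)
    omega

lemma le_of_mem_FF {X : Finset ℕ} (hX : X ∈ FF k n) : ∀ a ∈ X, a ≤ n := by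
  obtain ⟨y, -, hyn, -, rfl⟩ := hX
  intro a ha
  simp only [mem_biUnion, mem_Icc, mem_insert, mem_singleton] at ha
  obtain ⟨j, hj, rfl | rfl⟩ := ha <;> have := hyn j hj.1 hj.2 <;> omega

lemma one_le_of_mem_FF {X : Finset ℕ} (hX : X ∈ FF k n) (hne : X.Nonempty) : 1 ≤ k := by
  obtain ⟨y, -, -, -, rfl⟩ := hX
  obtain ⟨a, ha⟩ := hne
  simp only [mem_biUnion, mem_Icc] at ha
  omega

lemma image_sub_one_mem_FF (hk : 1 ≤ k) {X : Finset ℕ} (hX : X ∈ FF k n)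
    (h2 : ∀ a ∈ X, 2 ≤ a) : X.image (· - 1) ∈ FF k n := by
  obtain ⟨y, -, hyn, hgap, rfl⟩ := hX
  have hy2 : ∀ j, 1 ≤ j → j ≤ k → 2 ≤ y j := fun j h1 h2' =>
    h2 _ (mem_biUnion.mpr ⟨j, mem_Icc.mpr ⟨h1, h2'⟩, mem_insert_self _ _⟩)
  refine ⟨fun j => y j - 1, ?_, ?_, ?_, ?_⟩
  · have := hy2 1 le_rfl hk; dsimp only; omega
  · intro j h1 h2'; have := hyn j h1 h2'; dsimp only; omega
  · intro j h1 h2'; have := hgap j h1 h2'; have := hy2 j h1 h2'.le; dsimp only; omega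
  · rw [biUnion_image]
    refine biUnion_congr rfl fun j hj => ?_
    have := hy2 j (mem_Icc.mp hj).1 (mem_Icc.mp hj).2
    ext a
    simp only [image_insert, image_singleton, mem_insert, mem_singleton]
    omega

lemma image_add_one_mem_FF {X : Finset ℕ} (hX : X ∈ FF k n) (hn : ∀ a ∈ X, a + 1 ≤ n) :
    X.image (· + 1) ∈ FF k n := by
  obtain ⟨y, -, hyn, hgap, rfl⟩ := hX
  have hyn' : ∀ j, 1 ≤ j → j ≤ k → y j + 2 ≤ n := fun j h1 h2 =>
    hn _ (mem_biUnion.mpr ⟨j, mem_Icc.mpr ⟨h1, h2⟩, by simp⟩)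
  refine ⟨fun j => y j + 1, Nat.le_add_left 1 (y 1), fun j h1 h2 => hyn' j h1 h2,
    fun j h1 h2 => Nat.add_le_add_right (hgap j h1 h2) 1, ?_⟩
  rw [biUnion_image]
  exact biUnion_congr rfl fun j _ => by rw [image_insert, image_singleton]

lemma Icc_self_add_one (a : ℕ) : Icc a (a + 1) = {a, a + 1} := by
  ext c
  simp only [mem_Icc, mem_insert, mem_singleton]
  omega

lemma Icc_union_mem_FF_of_le {a b : ℕ} {R : Finset ℕ} (hb : 1 ≤ b) (hba : b ≤ a)
    (hR : ∀ c ∈ R, a + 2 ≤ c) (hX : Icc a (a + 1) ∪ R ∈ FF k n) :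
    Icc b (b + 1) ∪ R ∈ FF k n := by
  have hk := one_le_of_mem_FF hX ⟨a, by simp⟩
  obtain ⟨y, -, hyn, hgap, hXe⟩ := hX
  have hIcc : Icc 1 k = insert 1 (Icc 2 k) := by
    ext j
    simp only [mem_insert, mem_Icc]
    omega
  set T := (Icc 2 k).biUnion fun j => ({y j, y j + 1} : Finset ℕ)
  have hT : ∀ c ∈ T, y 1 + 2 ≤ c := by
    intro c hc
    simp only [T, mem_biUnion, mem_Icc, mem_insert, mem_singleton] at hc
    obtain ⟨j, hj, rfl | rfl⟩ := hc
    all_goals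
      have : y 1 + 2 ≤ y 2 := hgap 1 le_rfl (by omega)
      have := pairs_mono hgap (by omega) hj.1 hj.2
      omega
  rw [hIcc, biUnion_insert, ← Icc_self_add_one] at hXe
  have hy1a : y 1 = a := by
    have h₁ : y 1 ∈ Icc a (a + 1) ∪ R := by simp [hXe]
    have h₂ : a ∈ Icc (y 1) (y 1 + 1) ∪ T := by rw [← hXe]; simp
    simp only [mem_union, mem_Icc] at h₁ h₂
    have hay : a ≤ y 1 := h₁.elim (·.1) fun h => by have := hR _ h; omega
    have hya : y 1 ≤ a := h₂.elim (·.1) fun h => by have := hT _ h; omega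
    omega
  have hTR : T = R := by
    rw [hy1a] at hXe hT
    have hdisj : ∀ {U : Finset ℕ}, (∀ c ∈ U, a + 2 ≤ c) → Disjoint (Icc a (a + 1)) U :=
      fun hU => disjoint_left.mpr fun c hc hcU => by
        have := hU c hcU; simp only [mem_Icc] at hc; omega
    rw [← union_sdiff_cancel_left (hdisj hT), ← hXe, union_sdiff_cancel_left (hdisj hR)]
  refine ⟨Function.update y 1 b, by simpa, fun j h1 h2 => ?_, fun j h1 h2 => ?_, ?_⟩
  · rcases eq_or_ne j 1 with rfl | hj
    · have := hyn 1 le_rfl hk; simp; omega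
    · simpa [hj] using hyn j h1 h2
  · rcases eq_or_ne j 1 with rfl | hj
    · have := hgap 1 le_rfl h2; simp at this ⊢; omega
    · rw [Function.update_of_ne hj, Function.update_of_ne (by omega)]
      exact hgap j h1 h2
  · rw [hIcc, biUnion_insert, ← hTR, Function.update_self, Icc_self_add_one]
    congr 1
    exact biUnion_congr rfl fun j hj => by
      rw [Function.update_of_ne (by simp only [mem_Icc] at hj; omega)]

end PairDecompositions

lemma image_sub_one_image_add_one (F : Finset ℕ) : (F.image (· + 1)).image (· - 1) = F := by
  simp [image_image, Function.comp_def]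

lemma image_add_one_image_sub_one {F : Finset ℕ} (hF : ∀ a ∈ F, 1 ≤ a) :
    (F.image (· - 1)).image (· + 1) = F := by
  rw [image_image]
  conv_rhs => rw [← image_id (s := F)]
  exact image_congr fun a ha => Nat.sub_add_cancel (hF a ha)

lemma injOn_sub_one {F : Finset ℕ} (hF : ∀ a ∈ F, 1 ≤ a) : Set.InjOn (· - 1) (F : Set ℕ) :=
  fun a ha b hb hab => by have := hF a ha; have := hF b hb; simp only at hab; omega

lemma lep_image_sub_one {F G : Finset ℕ} (hF : ∀ a ∈ F, 1 ≤ a) (hG : ∀ a ∈ G, 1 ≤ a)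
    (h : lep F G) : lep (F.image (· - 1)) (G.image (· - 1)) :=
  lep_image (fun _ _ h => Nat.sub_le_sub_right h 1) (injOn_sub_one hF) (injOn_sub_one hG) h

lemma lep_image_add_one {F G : Finset ℕ} (h : lep F G) :
    lep (F.image (· + 1)) (G.image (· + 1)) :=
  lep_image (fun _ _ h => Nat.add_le_add_right h 1) (add_left_injective 1).injOn
    (add_left_injective 1).injOn h

lemma sub1_eq_image {T : Set (Finset ℕ)} (hT : ∀ F ∈ T, ∀ a ∈ F, 2 ≤ a) :
    sub1 T = (fun F => F.image (· - 1)) '' T := by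
  ext G
  constructor
  · rintro ⟨F, hF, -, rfl⟩
    exact ⟨F, hF, rfl⟩
  · rintro ⟨F, hF, rfl⟩
    exact ⟨F, hF, hT F hF, rfl⟩

lemma setOf_maximal_eq_image {α : Type*} (r : α → α → Prop) {A B : Set α} {u d : α → α}
    (hu : Set.MapsTo u A B) (hd : Set.MapsTo d B A)
    (hdu : ∀ a ∈ A, d (u a) = a) (hud : ∀ b ∈ B, u (d b) = b)
    (hru : ∀ a ∈ A, ∀ a' ∈ A, r a a' → r (u a) (u a'))
    (hrd : ∀ b ∈ B, ∀ b' ∈ B, r b b' → r (d b) (d b')) :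
    {a | a ∈ A ∧ ∀ a' ∈ A, r a a' → a = a'} =
      d '' {b | b ∈ B ∧ ∀ b' ∈ B, r b b' → b = b'} := by
  ext a
  constructor
  · rintro ⟨ha, hmax⟩
    refine ⟨u a, ⟨hu ha, fun b' hb' hr => ?_⟩, hdu a ha⟩
    have := hmax _ (hd hb') (hdu a ha ▸ hrd _ (hu ha) _ hb' hr)
    rw [this, hud b' hb']
  · rintro ⟨b, ⟨hb, hmax⟩, rfl⟩
    refine ⟨hd hb, fun a' ha' hr => ?_⟩
    have := hmax _ (hu ha') (hud b hb ▸ hru _ (hd hb) _ ha' hr)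
    rw [this, hdu a' ha']

section Candidates

variable {k n i : ℕ} {S : Set (Finset ℕ)}

lemma mem_SJcand_one {j : ℕ} {H : Finset ℕ} :
    H ∈ SJcand k n S j 1 ↔ (∀ a ∈ H, j + 2 ≤ a ∧ a ≤ n) ∧
      Icc j (j + 1) ∪ H ∈ FF k n ∧ ∃ F ∈ S, lep (Icc j (j + 1) ∪ H) F :=
  Iff.rfl

lemma mem_SJcand_of_mem_SJcand_succ (hi : 1 ≤ i) {H : Finset ℕ}
    (hH : H ∈ SJcand k n S (i + 1) 1) : H ∈ SJcand k n S i 1 := by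
  obtain ⟨hbd, hFF, F, hF, hlep⟩ := mem_SJcand_one.mp hH
  have hH3 : ∀ a ∈ H, i + 3 ≤ a := fun a ha => (hbd a ha).1
  exact ⟨fun a ha => ⟨by have := hH3 a ha; omega, (hbd a ha).2⟩,
    Icc_union_mem_FF_of_le hi (Nat.le_succ i) hH3 hFF, F, hF,
    lep_trans (lep_Icc_union (Nat.le_succ i) hH3) hlep⟩

lemma image_sub_one_mem_SJcand_sub1 (hi : 1 ≤ i) {H : Finset ℕ}
    (hH : H ∈ SJcand k n S (i + 1) 1) : H.image (· - 1) ∈ SJcand k n (sub1 S) i 1 := by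
  obtain ⟨hbd, hFF, F, hF, hlep⟩ := mem_SJcand_one.mp hH
  set X := Icc (i + 1) (i + 1 + 1) ∪ H
  have hX2 : ∀ a ∈ X, 2 ≤ a := by
    intro a ha
    rcases mem_union.mp ha with ha | ha
    · simp only [mem_Icc] at ha; omega
    · have := (hbd a ha).1; omega
  have hXne : X.Nonempty := ⟨i + 1, by simp [X]⟩
  have hF2 : ∀ b ∈ F, 2 ≤ b := fun b hb => by
    obtain ⟨a, ha, hab⟩ := exists_le_of_lep hlep hXne hb
    exact (hX2 a ha).trans hab
  have hXim : X.image (· - 1) = Icc i (i + 1) ∪ H.image (· - 1) := by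
    rw [image_union, ← image_add_right_Icc, image_sub_one_image_add_one]
  refine mem_SJcand_one.mpr ⟨fun a ha => ?_, ?_, F.image (· - 1), ⟨F, hF, hF2, rfl⟩, ?_⟩
  · obtain ⟨b, hb, rfl⟩ := mem_image.mp ha
    have := hbd b hb; omega
  · rw [← hXim]
    exact image_sub_one_mem_FF (one_le_of_mem_FF hFF hXne) hFF hX2
  · rw [← hXim]
    exact lep_image_sub_one (fun a ha => (hX2 a ha).trans' one_le_two)
      (fun b hb => (hF2 b hb).trans' one_le_two) hlep

lemma image_add_one_mem_SJcand (hS : S ⊆ FF k n) {G : Finset ℕ}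
    (hG : G ∈ SJcand k n (sub1 S) i 1) : G.image (· + 1) ∈ SJcand k n S (i + 1) 1 := by
  obtain ⟨hbd, hFF, _, ⟨F, hF, hF2, rfl⟩, hlep⟩ := mem_SJcand_one.mp hG
  set X := Icc i (i + 1) ∪ G
  have hXn : ∀ a ∈ X, a + 1 ≤ n := fun a ha => by
    obtain ⟨_, hb, hab⟩ := exists_ge_of_lep hlep ha
    obtain ⟨c, hc, rfl⟩ := mem_image.mp hb
    have := hF2 c hc
    have := le_of_mem_FF (hS hF) c hc
    omega
  have hXim : X.image (· + 1) = Icc (i + 1) (i + 1 + 1) ∪ G.image (· + 1) := by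
    rw [image_union, image_add_right_Icc]
  refine mem_SJcand_one.mpr ⟨fun a ha => ?_, ?_, F, hF, ?_⟩
  · obtain ⟨b, hb, rfl⟩ := mem_image.mp ha
    exact ⟨by have := (hbd b hb).1; omega, hXn b (mem_union_right _ hb)⟩
  · rw [← hXim]
    exact image_add_one_mem_FF hFF hXn
  · rw [← hXim, ← image_add_one_image_sub_one fun b hb => (hF2 b hb).trans' one_le_two]
    exact lep_image_add_one hlep

end Candidates

theorem SJ_shift_general (k n i : ℕ) (hi : 1 ≤ i)
    (S : Set (Finset ℕ)) (hS : IsAC k n S) :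
    ACle (SJ k n S (i + 1) 1) (SJ k n S i 1) ∧
      SJ k n (sub1 S) i 1 = sub1 (SJ k n S (i + 1) 1) := by
  have hbd : ∀ {j}, ∀ H ∈ SJcand k n S j 1, ∀ a ∈ H, a ≤ n := fun _ hH a ha =>
    ((mem_SJcand_one.mp hH).1 a ha).2
  have h2 : ∀ H ∈ SJcand k n S (i + 1) 1, ∀ a ∈ H, 2 ≤ a := fun _ hH a ha => by
    have := ((mem_SJcand_one.mp hH).1 a ha).1; omega
  have h1 : ∀ H ∈ SJcand k n S (i + 1) 1, ∀ a ∈ H, 1 ≤ a := fun H hH a ha =>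
    one_le_two.trans (h2 H hH a ha)
  refine ⟨fun H hH => exists_maximal_lep_of_bounded hbd (mem_SJcand_of_mem_SJcand_succ hi hH.1),
    ?_⟩
  rw [sub1_eq_image (T := SJ k n S (i + 1) 1) fun H hH => h2 H hH.1]
  exact setOf_maximal_eq_image lep (fun _ => image_add_one_mem_SJcand hS.1)
    (fun _ => image_sub_one_mem_SJcand_sub1 hi) (fun G _ => image_sub_one_image_add_one G)
    (fun H hH => image_add_one_image_sub_one (h1 H hH)) (fun _ _ _ _ => lep_image_add_one)
    (fun H hH H' hH' => lep_image_sub_one (h1 H hH) (h1 H' hH'))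

/-- `S([i+1, i+2]) ≤_p S([i, i+1])`, and
`(S − 1_{2k})([i, i+1]) = S([i+1, i+2]) − 1_{2k-2}`. -/
theorem SJ_shift (k n i : ℕ) (hk : 1 ≤ k) (hi : 1 ≤ i)
    (S : Set (Finset ℕ)) (hS : IsAC k n S) :
    ACle (SJ k n S (i + 1) 1) (SJ k n S i 1) ∧
      SJ k n (sub1 S) i 1 = sub1 (SJ k n S (i + 1) 1) :=
  SJ_shift_general k n i hi S hS
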